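/- arXiv:2210.01678 — 3 statements merged into one kernel-verified Lean document; each statement's English description precedes it below -/
import Mathlib

section
/- Every skew-symmetric matrix over F₂ (i.e., a matrix M with Mᵀ = M and all diagonal entries zero) has even rank. -/
/-!
The bilinear form `B v w = v ⬝ᵥ M *ᵥ w` is alternating: in `v ⬝ᵥ M *ᵥ v` the terms
`(i, j)` and `(j, i)` cancel and the diagonal ones vanish. Restricted to a complement of its
radical it is nondegenerate, on a space of dimension `rank M`.

A nondegenerate alternating form has a pair `x, y` with `B x y = 1`; their span is a plane on
which `B` is nondegenerate, so the space splits as that plane plus its orthogonal, which again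
carries a nondegenerate alternating form, and induction on the dimension shows that the
dimension is even.
-/

open Matrix Module Submodule

namespace LinearMap.BilinForm

variable {K V : Type*} [Field K] [AddCommGroup V] [Module K V] {B : LinearMap.BilinForm K V}

theorem IsRefl.nondegenerate_restrict_of_isCompl_ker (hB : B.IsRefl) {W : Submodule K V}
    (hW : IsCompl W (LinearMap.ker B)) : (B.restrict W).Nondegenerate := by
  refine (hB.domRestrict W).nondegenerate_iff_separatingLeft.mpr ?_
  rw [LinearMap.separatingLeft_iff_ker_eq_bot]
  change LinearMap.ker (B.restrict W) = ⊥
  rw [ker_restrict_eq_of_codisjoint hW.codisjoint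
      fun x _ y hy ↦ hB y x (by rw [LinearMap.mem_ker.mp hy, LinearMap.zero_apply]),
    ← disjoint_iff_comap_eq_bot]
  exact hW.disjoint

theorem Nondegenerate.exists_apply_eq_one [Nontrivial V] (hB : B.Nondegenerate) :
    ∃ x y, B x y = 1 := by
  obtain ⟨x, hx⟩ := exists_ne (0 : V)
  obtain ⟨y, hy⟩ : ∃ y, B x y ≠ 0 := by
    by_contra! h
    exact hx (hB.1 x h)
  exact ⟨x, (B x y)⁻¹ • y, by simp [hy]⟩

namespace IsAlt

theorem eq_zero_of_apply_smul_add_smul (hB : B.IsAlt) {x y : V} (hxy : B x y = 1) {a b : K}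
    (hx : B x (a • x + b • y) = 0) (hy : B y (a • x + b • y) = 0) : a = 0 ∧ b = 0 := by
  have hyx : B y x = -1 := by rw [← hB.neg_eq, hxy]
  simp only [map_add, map_smul, smul_eq_mul, hB.self_eq_zero, hxy, hyx] at hx hy
  exact ⟨by linear_combination -hy, by linear_combination hx⟩

theorem finrank_span_pair (hB : B.IsAlt) {x y : V} (hxy : B x y = 1) :
    finrank K (span K {x, y}) = 2 := by
  have hli : LinearIndependent K ![x, y] := by
    refine LinearIndependent.pair_iff.mpr fun a b hab ↦ ?_
    exact hB.eq_zero_of_apply_smul_add_smul hxy (by simp [hab]) (by simp [hab])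
  rw [← Matrix.range_cons_cons_empty x y ![], finrank_span_eq_card hli, Fintype.card_fin]

theorem disjoint_orthogonal_span_pair (hB : B.IsAlt) {x y : V} (hxy : B x y = 1) :
    Disjoint (span K {x, y}) (B.orthogonal (span K {x, y})) := by
  refine Submodule.disjoint_def.mpr fun z hz hz' ↦ ?_
  obtain ⟨a, b, rfl⟩ := mem_span_pair.mp hz
  obtain ⟨rfl, rfl⟩ := hB.eq_zero_of_apply_smul_add_smul hxy
    (hz' x (subset_span (by simp))) (hz' y (subset_span (by simp)))
  simp

theorem even_finrank [FiniteDimensional K V] (hB : B.IsAlt) (hnd : B.Nondegenerate) :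
    Even (finrank K V) := by
  induction hn : finrank K V using Nat.strong_induction_on generalizing V with
  | _ n ih =>
  obtain rfl | hpos := n.eq_zero_or_pos
  · exact Even.zero
  have : Nontrivial V := Module.nontrivial_of_finrank_pos (R := K) (hn ▸ hpos)
  obtain ⟨x, y, hxy⟩ := hnd.exists_apply_eq_one
  set P := span K {x, y}
  have hP : finrank K P = 2 := hB.finrank_span_pair hxy
  have h_two_le : 2 ≤ n := hn ▸ hP ▸ finrank_le P
  have hP_perp : finrank K (B.orthogonal P) = n - 2 := by
    rw [finrank_orthogonal hnd, hn, hP]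
  have hnd_perp : (B.restrict (B.orthogonal P)).Nondegenerate := by
    refine B.nondegenerate_restrict_of_disjoint_orthogonal hB.isRefl ?_
    rw [orthogonal_orthogonal hnd hB.isRefl]
    exact (hB.disjoint_orthogonal_span_pair hxy).symm
  obtain ⟨k, hk⟩ := ih (n - 2) (by omega) (B := B.restrict (B.orthogonal P)) (fun z ↦ hB z)
    hnd_perp hP_perp
  exact ⟨k + 1, by omega⟩

end IsAlt

end LinearMap.BilinForm

namespace Matrix

variable {ι R : Type*} [Fintype ι] [DecidableEq ι]

theorem isAlt_toBilin' [CommRing R] {M : Matrix ι ι R} (hM : Mᵀ = -M)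
    (hdiag : ∀ i, M i i = 0) : (toBilin' M).IsAlt := by
  intro v
  rw [toBilin'_apply, ← Finset.sum_product']
  refine Finset.sum_ninvolution Prod.swap (fun p ↦ ?_) (fun p hp hswap ↦ ?_) (by simp) (by simp)
  · have : M p.2 p.1 = - M p.1 p.2 := by rw [← transpose_apply M, hM, neg_apply]
    simp only [Prod.fst_swap, Prod.snd_swap, this]
    ring
  · obtain ⟨i, j⟩ := p
    obtain rfl : j = i := congrArg Prod.fst hswap
    simp [hdiag] at hp

theorem rank_add_finrank_ker_toBilin' {K : Type*} [Field K] (M : Matrix ι ι K) :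
    M.rank + finrank K (LinearMap.ker (toBilin' M)) = Fintype.card ι := by
  have hker : LinearMap.ker (toBilin' M) = LinearMap.ker Mᵀ.mulVecLin := by
    ext v
    simp [LinearMap.ext_iff, toBilin'_apply', dotProduct_mulVec, dotProduct_eq_zero_iff]
  rw [← rank_transpose, hker, rank, LinearMap.finrank_range_add_finrank_ker,
    finrank_fintype_fun_eq_card]

end Matrix

/-- Every skew-symmetric (alternating) matrix over `𝔽₂`, i.e. a symmetric matrix
with zero diagonal, has even rank. -/
theorem alternating_matrix_even_rank (n : ℕ) (M : Matrix (Fin n) (Fin n) (ZMod 2))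
    (hsym : Mᵀ = M) (hdiag : ∀ i, M i i = 0) :
    Even M.rank := by
  have hB : (toBilin' M).IsAlt :=
    isAlt_toBilin' (by rw [hsym]; ext i j; exact (ZMod.neg_eq_self_mod_two _).symm) hdiag
  obtain ⟨W, hW⟩ := (LinearMap.ker (toBilin' M)).exists_isCompl
  have hrank : M.rank = finrank (ZMod 2) W := by
    have h_rank := rank_add_finrank_ker_toBilin' M
    have h_compl := Submodule.finrank_add_eq_of_isCompl hW
    rw [Fintype.card_fin] at h_rank
    rw [Module.finrank_fin_fun] at h_compl
    omega
  rw [hrank]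
  exact LinearMap.BilinForm.IsAlt.even_finrank (fun w ↦ hB w)
    (hB.isRefl.nondegenerate_restrict_of_isCompl_ker hW.symm)
end

section
/- Let A be the F₂-matrix of size t×t with off-diagonal entries a_{ij} = [p_j/p_i] (additive Legendre symbol) and diagonal entries a_{ii} = Σ_{j≠i} a_{ij}, where p₁,...,p_t are distinct primes different from 2 and 3 and ñ = p₁···p_t. Then A + Aᵀ = D_{-1} + r_{-1}ᵀ r_{-1}, where r_{-1} = ([-1/p₁],...,[-1/p_t]) ∈ F₂ᵗ and D_{-1} = diag(r_{-1}). -/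
open Matrix

/-- The additive Legendre (Jacobi) symbol `[n/m] ∈ 𝔽₂`. -/
def addLeg (n : ℤ) (m : ℕ) : ZMod 2 := if jacobiSym n m = 1 then 0 else 1

/-- The Rédei-type matrix `A` associated to distinct primes `p₁,…,p_t` (all `≠ 2,3`):
`a_{ij} = [p_j/p_i]` for `i ≠ j`, `a_{ii} = ∑_{j ≠ i} a_{ij}`. -/
def redeiMatrix {t : ℕ} (p : Fin t → ℕ) : Matrix (Fin t) (Fin t) (ZMod 2) :=
  Matrix.of fun i j =>
    if i = j then ∑ k ∈ Finset.univ.erase i, addLeg (p k) (p i)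
    else addLeg (p j) (p i)

lemma neg_one_pow_if (n : ℕ) :
    (if ((-1 : ℤ)) ^ n = 1 then (0 : ZMod 2) else 1) = (n : ZMod 2) := by
  rcases Nat.even_or_odd n with h | h
  · rw [h.neg_one_pow, if_pos rfl]
    obtain ⟨k, hk⟩ := h
    subst hk; push_cast
    exact (CharTwo.add_self_eq_zero _).symm
  · rw [h.neg_one_pow, if_neg (by norm_num)]
    obtain ⟨k, hk⟩ := h
    subst hk; push_cast
    have : (2 : ZMod 2) = 0 := by decide
    rw [this]; ring

lemma addLeg_neg_one {q : ℕ} (hq : q.Prime) (hq2 : q ≠ 2) :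
    addLeg (-1) q = ((q / 2 : ℕ) : ZMod 2) := by
  have hodd : Odd q := hq.odd_of_ne_two hq2
  rw [addLeg, jacobiSym.at_neg_one hodd, ZMod.χ₄_eq_neg_one_pow (Nat.odd_iff.mp hodd),
    neg_one_pow_if]

lemma addLeg_reciprocity {q r : ℕ} (hq : q.Prime) (hr : r.Prime)
    (hq2 : q ≠ 2) (hr2 : r ≠ 2) (hqr : q ≠ r) :
    addLeg r q + addLeg q r = addLeg (-1) q * addLeg (-1) r := by
  have : Fact q.Prime := ⟨hq⟩
  have : Fact r.Prime := ⟨hr⟩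
  have h := legendreSym.quadratic_reciprocity hq2 hr2 hqr
  have h1 : ((r : ℤ) : ZMod q) ≠ 0 := mod_cast ZMod.prime_ne_zero q r hqr
  have h2 : ((q : ℤ) : ZMod r) ≠ 0 := mod_cast ZMod.prime_ne_zero r q hqr.symm
  have ha := legendreSym.eq_one_or_neg_one q h1
  have hb := legendreSym.eq_one_or_neg_one r h2
  have e1 : addLeg r q = if legendreSym q r = 1 then 0 else 1 := by
    rw [addLeg, jacobiSym.legendreSym.to_jacobiSym]
  have e2 : addLeg q r = if legendreSym r q = 1 then 0 else 1 := by
    rw [addLeg, jacobiSym.legendreSym.to_jacobiSym]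
  rw [e1, e2, addLeg_neg_one hq hq2, addLeg_neg_one hr hr2, ← Nat.cast_mul,
    ← neg_one_pow_if (q / 2 * (r / 2)), ← h]
  rcases ha with ha | ha <;> rcases hb with hb | hb <;>
    simp [ha, hb] <;> decide

/-- `A + Aᵀ = D₋₁ + r₋₁ᵀ r₋₁` where `r₋₁ = ([-1/p₁],…,[-1/p_t])` and
`D₋₁ = diag(r₋₁)`. -/
theorem redei_add_transpose {t : ℕ} (p : Fin t → ℕ)
    (hp : ∀ i, (p i).Prime) (hinj : Function.Injective p)
    (h2 : ∀ i, p i ≠ 2) (h3 : ∀ i, p i ≠ 3) :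
    redeiMatrix p + (redeiMatrix p)ᵀ =
      Matrix.diagonal (fun i => addLeg (-1) (p i)) +
        Matrix.of (fun i j => addLeg (-1) (p i) * addLeg (-1) (p j)) := by
  ext i j
  simp only [Matrix.add_apply, Matrix.transpose_apply, redeiMatrix, Matrix.of_apply,
    Matrix.diagonal_apply]
  rcases eq_or_ne i j with rfl | hij
  · simp only [if_pos rfl]
    have hx : ∀ x : ZMod 2, x + x = 0 := by decide
    have hm : ∀ x : ZMod 2, x * x = x := by decide
    rw [hx, hm]
    exact (hx _).symm
  · rw [if_neg hij, if_neg (Ne.symm hij), if_neg hij, zero_add]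
    exact addLeg_reciprocity (hp i) (hp j) (h2 i) (h2 j) (fun h => hij (hinj h))
end

section
/- With A as the Rédei-type matrix associated to ñ = p₁···p_t (p_i distinct primes ≠ 2,3, with a_{ij} = [p_j/p_i] for i≠j and a_{ii} = Σ_{j≠i} a_{ij}), the sum of all columns of A is the zero vector, and the sum of all rows of A equals (1 + [-1/ñ])·r_{-1}, where r_{-1} = ([-1/p₁],...,[-1/p_t]). -/
lemma addLeg_neg_one_of_odd {b : ℕ} (hb : Odd b) :
    addLeg (-1) b = if b % 4 = 1 then 0 else 1 := by
  unfold addLeg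
  rw [jacobiSym.at_neg_one hb, ZMod.χ₄_nat_eq_if_mod_four]
  have h2 : b % 2 = 1 := Nat.odd_iff.mp hb
  have h4 : b % 4 = 1 ∨ b % 4 = 3 := by omega
  rcases h4 with h | h <;> simp [h, h2]

lemma addLeg_reciprocity_s5 {a b : ℕ} (ha : a.Prime) (hb : b.Prime) (ha2 : a ≠ 2)
    (hb2 : b ≠ 2) (hab : a ≠ b) :
    addLeg a b + addLeg b a = addLeg (-1) a * addLeg (-1) b := by
  have hao := ha.eq_two_or_odd'.resolve_left ha2
  have hbo := hb.eq_two_or_odd'.resolve_left hb2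
  have ha4 : a % 4 = 1 ∨ a % 4 = 3 := by have := Nat.odd_iff.mp hao; omega
  have hb4 : b % 4 = 1 ∨ b % 4 = 3 := by have := Nat.odd_iff.mp hbo; omega
  rw [addLeg_neg_one_of_odd hao, addLeg_neg_one_of_odd hbo]
  simp only [addLeg]
  have hcop : (Int.gcd b a) = 1 := by
    rw [Int.gcd_natCast_natCast]
    exact (Nat.coprime_primes hb ha).mpr (Ne.symm hab)
  rcases ha4 with h1 | h1
  · rw [jacobiSym.quadratic_reciprocity_one_mod_four h1 hbo]
    rcases jacobiSym.eq_one_or_neg_one hcop with h | h <;>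
      · simp only [h, h1, if_pos, if_neg, reduceIte]
        simp [CharTwo.add_self_eq_zero]
  · rcases hb4 with h2 | h2
    · rw [jacobiSym.quadratic_reciprocity_one_mod_four' hao h2]
      rcases jacobiSym.eq_one_or_neg_one hcop with h | h <;>
        · simp only [h, h1, h2, reduceIte]
          simp [CharTwo.add_self_eq_zero]
    · rw [jacobiSym.quadratic_reciprocity_three_mod_four h1 h2]
      rcases jacobiSym.eq_one_or_neg_one hcop with h | h <;>
        · simp only [h, h1, h2, reduceIte, neg_neg]
          simp [CharTwo.add_self_eq_zero]
        
lemma addLeg_mul_right (a : ℤ) (m n : ℕ) (hm : a.gcd m = 1) (hn : a.gcd n = 1)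
    (hm0 : m ≠ 0) (hn0 : n ≠ 0) :
    addLeg a (m * n) = addLeg a m + addLeg a n := by
  unfold addLeg
  rw [jacobiSym.mul_right' a hm0 hn0]
  rcases jacobiSym.eq_one_or_neg_one hm with h1 | h1 <;>
    rcases jacobiSym.eq_one_or_neg_one hn with h2 | h2 <;>
      simp [h1, h2] <;> decide

lemma addLeg_neg_one_prod {t : ℕ} (p : Fin t → ℕ) (hp : ∀ i, (p i).Prime) :
    addLeg (-1) (∏ k, p k) = ∑ k, addLeg (-1) (p k) := by
  classical
  induction (Finset.univ : Finset (Fin t)) using Finset.induction_on with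
  | empty => simp [addLeg, jacobiSym.one_right]
  | @insert x s hx ih =>
    rw [Finset.prod_insert hx, Finset.sum_insert hx,
      addLeg_mul_right (-1) (p x) (∏ k ∈ s, p k) (by simp [Int.gcd]) (by simp [Int.gcd])
        (hp x).ne_zero (Finset.prod_ne_zero_iff.mpr fun i _ => (hp i).ne_zero), ih]

/-- The sum of all columns of the Rédei matrix `A` is zero, and the sum of all
rows equals `(1 + [-1/ñ])·r₋₁` where `ñ = p₁⋯p_t`. -/
theorem redei_row_col_sums {t : ℕ} (p : Fin t → ℕ)
    (hp : ∀ i, (p i).Prime) (hinj : Function.Injective p)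
    (h2 : ∀ i, p i ≠ 2) (h3 : ∀ i, p i ≠ 3) :
    (∀ i, ∑ j, redeiMatrix p i j = 0) ∧
      (∀ j, ∑ i, redeiMatrix p i j =
        (1 + addLeg (-1) (∏ k, p k)) * addLeg (-1) (p j)) := by
  classical
  have hrow : ∀ i, ∑ j, redeiMatrix p i j = 0 := by
    intro i
    rw [← Finset.add_sum_erase _ _ (Finset.mem_univ i)]
    have h1 : redeiMatrix p i i = ∑ k ∈ Finset.univ.erase i, addLeg (p k) (p i) := by
      simp [redeiMatrix]
    have h2' : ∀ j ∈ Finset.univ.erase i, redeiMatrix p i j = addLeg (p j) (p i) := by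
      intro j hj
      have : i ≠ j := (Finset.ne_of_mem_erase hj).symm
      simp [redeiMatrix, this]
    rw [h1, Finset.sum_congr rfl h2']
    exact CharTwo.add_self_eq_zero _
  refine ⟨hrow, fun j => ?_⟩
  rw [← Finset.add_sum_erase _ _ (Finset.mem_univ j)]
  have h1 : redeiMatrix p j j = ∑ k ∈ Finset.univ.erase j, addLeg (p k) (p j) := by
    simp [redeiMatrix]
  have h2' : ∀ i ∈ Finset.univ.erase j, redeiMatrix p i j = addLeg (p j) (p i) := by
    intro i hi
    have : i ≠ j := Finset.ne_of_mem_erase hi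
    simp [redeiMatrix, this]
  rw [h1, Finset.sum_congr rfl h2', ← Finset.sum_add_distrib]
  have hrec : ∀ i ∈ Finset.univ.erase j,
      addLeg (p i) (p j) + addLeg (p j) (p i) = addLeg (-1) (p i) * addLeg (-1) (p j) := by
    intro i hi
    exact addLeg_reciprocity_s5 (hp i) (hp j) (h2 i) (h2 j)
      (fun h => Finset.ne_of_mem_erase hi (hinj h))
  rw [Finset.sum_congr rfl hrec, ← Finset.sum_mul]
  have hsum : ∑ i ∈ Finset.univ.erase j, addLeg (-1) (p i)
      = addLeg (-1) (∏ k, p k) + addLeg (-1) (p j) := by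
    rw [addLeg_neg_one_prod p hp, ← Finset.add_sum_erase _ _ (Finset.mem_univ j),
      add_comm (addLeg (-1) (p j)), add_assoc, CharTwo.add_self_eq_zero, add_zero]
  have hsq : ∀ x : ZMod 2, x * x = x := by decide
  rw [hsum, add_mul, hsq]
  ring
end
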